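/- Let (T, η, μ) be a monad on a category C and let (L, l) be a localization on C. If T preserves L-equivalences (i.e. Tg is an L-equivalence whenever g is an L-equivalence), then for every T-algebra (X, a) there is a unique morphism ã : T(LX) → LX such that (LX, ã) is a T-algebra and l_X : (X, a) → (LX, ã) is a morphism of T-algebras. -/

import Mathlib

/-!
Objects of the form `L Z` are local, and maps into a local object extend uniquely along
`L`-equivalences. Since `T` preserves `L`-equivalences, `T l_X` is one, so `a ≫ l_X` extends
uniquely along it to some `ã : T (L X) ⟶ L X`. The algebra laws for `ã` hold after
precomposition with the `L`-equivalences `l_X` and `T (T l_X)`, because `l_X` intertwines `a`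
and `ã`; cancelling these equivalences against the local target `L X` gives the laws.
-/

open CategoryTheory

/-- A localization (reflection) on a category `C`: a functor `L : C ⥤ C` with a natural
transformation `l : 𝟭 C ⟶ L` such that `L (l X) = l (L X)` and these morphisms are
isomorphisms. -/
structure LocalizationData (C : Type*) [Category C] where
  /-- the localization functor -/
  L : C ⥤ C
  /-- the unit -/
  l : 𝟭 C ⟶ L
  coincide : ∀ X : C, L.map (l.app X) = l.app (L.obj X)
  isIso : ∀ X : C, IsIso (L.map (l.app X))

/-- An object `X` is `L`-local if `l X : X ⟶ L X` is an isomorphism. -/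
def LocalizationData.IsLocal {C : Type*} [Category C] (Λ : LocalizationData C) (X : C) : Prop :=
  IsIso (Λ.l.app X)

/-- A morphism `g` is an `L`-equivalence if `L g` is an isomorphism. -/
def LocalizationData.IsEquiv {C : Type*} [Category C] (Λ : LocalizationData C)
    {X Y : C} (g : X ⟶ Y) : Prop :=
  IsIso (Λ.L.map g)

namespace CategoryTheory.Monad

variable {C : Type*} [Category C] (T : Monad C) {X Y : C} {f : X ⟶ Y}
  {a : T.obj X ⟶ X} {b : T.obj Y ⟶ Y}

lemma comp_unit_comp_of_map_comp (hf : T.map f ≫ b = a ≫ f)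
    (hunit : T.η.app X ≫ a = 𝟙 X) :
    f ≫ T.η.app Y ≫ b = f := by
  have hη := T.η.naturality_assoc f b
  simp only [Functor.id_map] at hη
  rw [hη, hf, reassoc_of% hunit]

lemma map_map_comp_mu_comp_of_map_comp (hf : T.map f ≫ b = a ≫ f)
    (hassoc : T.μ.app X ≫ a = T.map a ≫ a) :
    T.map (T.map f) ≫ T.μ.app Y ≫ b = T.map (T.map f) ≫ T.map b ≫ b := by
  have hμ := T.μ.naturality_assoc f b
  simp only [Functor.comp_map] at hμ
  rw [hμ, hf, reassoc_of% hassoc, ← Functor.map_comp_assoc, hf, Functor.map_comp_assoc, hf]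

end CategoryTheory.Monad

namespace LocalizationData

variable {C : Type*} [Category C] (Λ : LocalizationData C)

lemma isLocal_obj (X : C) : Λ.IsLocal (Λ.L.obj X) := by
  rw [IsLocal, ← Λ.coincide X]
  exact Λ.isIso X

lemma isEquiv_l_app (X : C) : Λ.IsEquiv (Λ.l.app X) :=
  Λ.isIso X

lemma ext_of_isEquiv {A B Z : C} (hZ : Λ.IsLocal Z) {g : A ⟶ B} (hg : Λ.IsEquiv g)
    {h₁ h₂ : B ⟶ Z} (e : g ≫ h₁ = g ≫ h₂) : h₁ = h₂ := by
  have : IsIso (Λ.l.app Z) := hZ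
  have : IsIso (Λ.L.map g) := hg
  have hL : Λ.L.map h₁ = Λ.L.map h₂ := by
    rw [← cancel_epi (Λ.L.map g), ← Functor.map_comp, ← Functor.map_comp, e]
  rw [← cancel_mono (Λ.l.app Z), ← Functor.id_map h₁, ← Functor.id_map h₂,
    Λ.l.naturality, Λ.l.naturality, hL]

lemma existsUnique_comp_eq_of_isEquiv {A B Z : C} (hZ : Λ.IsLocal Z) {g : A ⟶ B}
    (hg : Λ.IsEquiv g) (f : A ⟶ Z) : ∃! h : B ⟶ Z, g ≫ h = f := by
  have : IsIso (Λ.l.app Z) := hZ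
  have : IsIso (Λ.L.map g) := hg
  have ng := Λ.l.naturality g
  have nf := Λ.l.naturality f
  simp only [Functor.id_map] at ng nf
  have hlift : g ≫ Λ.l.app B ≫ inv (Λ.L.map g) ≫ Λ.L.map f ≫ inv (Λ.l.app Z) = f := by
    rw [reassoc_of% ng, IsIso.hom_inv_id_assoc, ← reassoc_of% nf, IsIso.hom_inv_id,
      Category.comp_id]
  exact ⟨_, hlift, fun h hh => Λ.ext_of_isEquiv hZ hg (by rw [hh, hlift])⟩

end LocalizationData

/-- If a monad `T` preserves `L`-equivalences, then every `T`-algebra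
structure `a : T X ⟶ X` extends uniquely to a `T`-algebra structure `a'` on `L X` making
`l_X` a morphism of `T`-algebras. -/
theorem unique_algebra_structure_on_localization
    {C : Type*} [Category C] (T : Monad C) (Λ : LocalizationData C)
    (hT : ∀ ⦃X Y : C⦄ (g : X ⟶ Y), Λ.IsEquiv g → Λ.IsEquiv (T.map g))
    (X : C) (a : T.obj X ⟶ X)
    (hunit : T.η.app X ≫ a = 𝟙 X)
    (hassoc : T.μ.app X ≫ a = T.map a ≫ a) :
    ∃! a' : T.obj (Λ.L.obj X) ⟶ Λ.L.obj X,
      (T.η.app (Λ.L.obj X) ≫ a' = 𝟙 (Λ.L.obj X) ∧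
        T.μ.app (Λ.L.obj X) ≫ a' = T.map a' ≫ a') ∧
      T.map (Λ.l.app X) ≫ a' = a ≫ Λ.l.app X := by
  have hlocal := Λ.isLocal_obj X
  have hl := Λ.isEquiv_l_app X
  obtain ⟨a', ha', huniq⟩ :=
    Λ.existsUnique_comp_eq_of_isEquiv hlocal (hT _ hl) (a ≫ Λ.l.app X)
  refine ⟨a', ⟨⟨?_, ?_⟩, ha'⟩, fun b hb => huniq b hb.2⟩
  · refine Λ.ext_of_isEquiv hlocal hl ?_
    rw [T.comp_unit_comp_of_map_comp ha' hunit, Category.comp_id]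
  · exact Λ.ext_of_isEquiv hlocal (hT _ (hT _ hl))
      (T.map_map_comp_mu_comp_of_map_comp ha' hassoc)
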